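/- In the two-sided card model, the event {X^{i+1} > Y^{j+1}} is determined by the assignment (to X or Y) of only the top i+j+1 values a_1, ..., a_{i+j+1}. -/

import Mathlib

/-! Let `c = a_{i+j+2}` and let `k` be the number of the top `i+j+1` values that lie in `X`, so
that `X` and `Y` have `k` and `i+j+1-k` elements above `c`. Hence `X^{i+1} > c` iff `k ≥ i+1`,
and `Y^{j+1} > c` iff `k ≤ i`: exactly one of the two order statistics lies above `c`, and
`X^{i+1} > Y^{j+1}` iff `k ≥ i+1`, a condition on the assignment of `a_1, …, a_{i+j+1}` alone.
Both sets have `n` elements because the card involution swaps `X` and `Y`. -/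

open scoped Classical

/-- The `k`-th largest element (1-indexed) of a finite set of reals, defaulting to `0`. -/
noncomputable def kthLargest (s : Finset ℝ) (k : ℕ) : ℝ :=
  ((s.sort (· ≤ ·)).reverse).getD (k - 1) 0

open Finset

theorem card_filter_orderEmbOfFin_lt {α : Type*} [LinearOrder α] (s : Finset α) (i : Fin #s) :
    #{y ∈ s | s.orderEmbOfFin rfl i < y} = #s - 1 - i := by
  set e := s.orderEmbOfFin rfl
  have himage : {y ∈ s | e i < y} = (Ioi i).map e.toEmbedding := by
    ext y
    rw [mem_filter, ← Finset.mem_coe (s := s), ← range_orderEmbOfFin s rfl]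
    simp only [Set.mem_range, mem_map, mem_Ioi, RelEmbedding.coe_toEmbedding]
    constructor
    · rintro ⟨⟨j, rfl⟩, hij⟩
      exact ⟨j, e.lt_iff_lt.mp hij, rfl⟩
    · rintro ⟨j, hij, rfl⟩
      exact ⟨⟨j, rfl⟩, e.lt_iff_lt.mpr hij⟩
  rw [himage, card_map, Fin.card_Ioi]

theorem kthLargest_eq_orderEmbOfFin (s : Finset ℝ) {k : ℕ} (hk : k < #s) :
    kthLargest s (k + 1) = s.orderEmbOfFin rfl ⟨#s - 1 - k, by omega⟩ := by
  have hlen : k < (s.sort (· ≤ ·)).reverse.length := by simpa using hk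
  simp only [kthLargest, Nat.add_sub_cancel, List.getD_eq_getElem _ _ hlen,
    List.getElem_reverse, orderEmbOfFin_apply, length_sort, Fin.getElem_fin]

theorem kthLargest_mem (s : Finset ℝ) {k : ℕ} (hk : k < #s) : kthLargest s (k + 1) ∈ s := by
  rw [kthLargest_eq_orderEmbOfFin s hk]
  exact orderEmbOfFin_mem s rfl _

theorem card_filter_kthLargest_lt (s : Finset ℝ) {k : ℕ} (hk : k < #s) :
    #{y ∈ s | kthLargest s (k + 1) < y} = k := by
  rw [kthLargest_eq_orderEmbOfFin s hk, card_filter_orderEmbOfFin_lt, Fin.val_mk]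
  omega

theorem lt_kthLargest_iff (s : Finset ℝ) {k : ℕ} (hk : k < #s) (t : ℝ) :
    t < kthLargest s (k + 1) ↔ k + 1 ≤ #{y ∈ s | t < y} := by
  set c := kthLargest s (k + 1)
  have hc : #{y ∈ s | c < y} = k := card_filter_kthLargest_lt s hk
  constructor
  · intro htc
    have hsub : {y ∈ s | c < y} ⊂ {y ∈ s | t < y} := by
      rw [ssubset_iff_of_subset fun y hy => ?_]
      · exact ⟨c, mem_filter.mpr ⟨kthLargest_mem s hk, htc⟩, by simp⟩
      · simp only [mem_filter] at hy ⊢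
        exact ⟨hy.1, htc.trans hy.2⟩
    simpa [hc] using card_lt_card hsub
  · intro hcard
    by_contra! hct
    have hsub : {y ∈ s | t < y} ⊆ {y ∈ s | c < y} := fun y hy => by
      simp only [mem_filter] at hy ⊢
      exact ⟨hy.1, hct.trans_lt hy.2⟩
    have := card_le_card hsub
    omega

theorem kthLargest_lt_kthLargest_iff_of_threshold (X Y : Finset ℝ) {i j : ℕ} (hi : i < #X)
    (hj : j < #Y) (c : ℝ) (hc : #{x ∈ X | c < x} + #{y ∈ Y | c < y} = i + j + 1) :
    kthLargest Y (j + 1) < kthLargest X (i + 1) ↔ i + 1 ≤ #{x ∈ X | c < x} := by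
  have hX := lt_kthLargest_iff X hi c
  have hY := lt_kthLargest_iff Y hj c
  constructor
  · intro hYX
    by_contra! hXc
    have hcY : c < kthLargest Y (j + 1) := hY.mpr (by omega)
    have hXle : kthLargest X (i + 1) ≤ c := not_lt.mp fun h => by have := hX.mp h; omega
    linarith
  · intro hXc
    have hYc : kthLargest Y (j + 1) ≤ c := not_lt.mp fun h => by have := hY.mp h; omega
    exact hYc.trans_lt (hX.mpr hXc)

theorem two_mul_card_filter_eq_of_involutive {ι : Type*} [Fintype ι] {σ : ι → ι}
    (hσ : Function.Involutive σ) {b : ι → Bool} (hb : ∀ x, b (σ x) = !b x) (v : Bool) :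
    2 * #{x | b x = v} = Fintype.card ι := by
  have hswap : #{x | b x = true} = #{x | b x = false} :=
    card_nbij' σ σ (fun x hx => by simp_all) (fun x hx => by simp_all)
      (fun x _ => hσ x) (fun x _ => hσ x)
  have htotal := card_filter_add_card_filter_not (s := univ) (fun x => b x = true)
  simp only [Bool.not_eq_true, card_univ] at htotal
  cases v <;> omega

theorem card_filter_lt_image_of_strictAnti {ι β : Type*} [LinearOrder ι] [LinearOrder β]
    {a : ι → β} (ha : StrictAnti a) (s : Finset ι) (m : ι) :
    #{y ∈ s.image a | a m < y} = #{x ∈ s | x < m} := by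
  rw [filter_image, card_image_of_injective _ ha.injective]
  simp only [ha.lt_iff_gt]

theorem kthLargest_lt_kthLargest_iff_card_top {N i j : ℕ} {a : Fin N → ℝ} (ha : StrictAnti a)
    (b : Fin N → Bool) (hi : i < #{x | b x = true}) (hj : j < #{x | b x = false})
    (hm : i + j + 1 < N) :
    kthLargest (({x | b x = false} : Finset _).image a) (j + 1) <
        kthLargest (({x | b x = true} : Finset _).image a) (i + 1) ↔
      i + 1 ≤ #{x ∈ Iio ⟨i + j + 1, hm⟩ | b x = true} := by
  set m : Fin N := ⟨i + j + 1, hm⟩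
  have htop : ∀ v : Bool, #{y ∈ ({x | b x = v} : Finset _).image a | a m < y} =
      #{x ∈ Iio m | b x = v} := fun v => by
    rw [card_filter_lt_image_of_strictAnti ha, filter_filter]
    congr 1
    ext x
    simp [and_comm]
  have hsplit := card_filter_add_card_filter_not (s := Iio m) (fun x => b x = true)
  simp only [Bool.not_eq_true, Fin.card_Iio] at hsplit
  rw [← htop true]
  refine kthLargest_lt_kthLargest_iff_of_threshold _ _ ?_ ?_ (a m) ?_
  · rwa [card_image_of_injective _ ha.injective]
  · rwa [card_image_of_injective _ ha.injective]
  · rw [htop, htop, hsplit]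

theorem event_determined_by_top_values_general (n i j : ℕ)
    (hi : i + 1 ≤ n) (hj : j + 1 ≤ n)
    (a : Fin (2 * n) → ℝ) (ha : StrictAnti a)
    (pair : Fin (2 * n) → Fin (2 * n))
    (hinv : ∀ x, pair (pair x) = x)
    (f g : {f : Fin (2 * n) → Bool // ∀ x, f (pair x) = !(f x)})
    (hagree : ∀ x : Fin (2 * n), (x : ℕ) < i + j + 1 → f.1 x = g.1 x) :
    (kthLargest ((Finset.univ.filter (fun x => f.1 x = true)).image a) (i + 1) >
        kthLargest ((Finset.univ.filter (fun x => f.1 x = false)).image a) (j + 1)) ↔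
      (kthLargest ((Finset.univ.filter (fun x => g.1 x = true)).image a) (i + 1) >
        kthLargest ((Finset.univ.filter (fun x => g.1 x = false)).image a) (j + 1)) := by
  have hm : i + j + 1 < 2 * n := by omega
  have hcard (b : {f : Fin (2 * n) → Bool // ∀ x, f (pair x) = !(f x)}) (v : Bool) :
      #{x | b.1 x = v} = n := by
    have := two_mul_card_filter_eq_of_involutive hinv b.2 v
    rw [Fintype.card_fin] at this
    omega
  have htop : ({x ∈ Iio (⟨i + j + 1, hm⟩ : Fin (2 * n)) | f.1 x = true} : Finset _) =
      {x ∈ Iio (⟨i + j + 1, hm⟩ : Fin (2 * n)) | g.1 x = true} :=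
    filter_congr fun x hx => by rw [hagree x (Fin.lt_def.mp (mem_Iio.mp hx))]
  have hbounds (b : {f : Fin (2 * n) → Bool // ∀ x, f (pair x) = !(f x)}) :=
    kthLargest_lt_kthLargest_iff_card_top ha b.1 (by rw [hcard]; omega) (by rw [hcard]; omega) hm
  simp only [gt_iff_lt]
  rw [hbounds f, hbounds g, htop]

theorem event_determined_by_top_values (n i j : ℕ)
    (hi : i + 1 ≤ n) (hj : j + 1 ≤ n)
    (a : Fin (2 * n) → ℝ) (ha : StrictAnti a)
    (pair : Fin (2 * n) → Fin (2 * n))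
    (hinv : ∀ x, pair (pair x) = x) (hnf : ∀ x, pair x ≠ x)
    (f g : {f : Fin (2 * n) → Bool // ∀ x, f (pair x) = !(f x)})
    (hagree : ∀ x : Fin (2 * n), (x : ℕ) < i + j + 1 → f.1 x = g.1 x) :
    (kthLargest ((Finset.univ.filter (fun x => f.1 x = true)).image a) (i + 1) >
        kthLargest ((Finset.univ.filter (fun x => f.1 x = false)).image a) (j + 1)) ↔
      (kthLargest ((Finset.univ.filter (fun x => g.1 x = true)).image a) (i + 1) >
        kthLargest ((Finset.univ.filter (fun x => g.1 x = false)).image a) (j + 1)) :=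
  event_determined_by_top_values_general n i j hi hj a ha pair hinv f g hagree
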